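/- arXiv:1904.07913 — 2 statements merged into one kernel-verified Lean document; each statement's English description precedes it below -/
import Mathlib

section
/- Let c > −p, η ≥ 0, p a positive integer, and define Υ(k) = (c+p)Γ(k+1)Γ(p+η+1) / ((c+k)Γ(p+1)Γ(k+η+1)) for integers k ≥ p. Then Υ is decreasing in k, and in particular 0 < Υ(k) ≤ Υ(p+1) = (c+p)(p+1)/((c+p+1)(p+η+1)) for all k ≥ p+1. -/
open Real

/-- The multiplier Υ(k) arising from D_z^{-η}(J_{c,p} f). -/
noncomputable def Upsilon (p : ℕ) (c η : ℝ) (k : ℕ) : ℝ :=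
  (c + p) * Real.Gamma ((k : ℝ) + 1) * Real.Gamma ((p : ℝ) + η + 1) /
    ((c + k) * Real.Gamma ((p : ℝ) + 1) * Real.Gamma ((k : ℝ) + η + 1))

lemma upsilon_pos (p : ℕ) (c η : ℝ) (hc : -(p : ℝ) < c) (hη : 0 ≤ η) (k : ℕ)
    (hk : p ≤ k) : 0 < Upsilon p c η k := by
  have hkp : (p : ℝ) ≤ k := Nat.cast_le.mpr hk
  have hck : (0 : ℝ) < c + k := by linarith
  have hcp : (0 : ℝ) < c + p := by linarith
  have hA : 0 < Real.Gamma ((k : ℝ) + 1) := Real.Gamma_pos_of_pos (by positivity)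
  have hB : 0 < Real.Gamma ((p : ℝ) + η + 1) := Real.Gamma_pos_of_pos (by positivity)
  have hC : 0 < Real.Gamma ((p : ℝ) + 1) := Real.Gamma_pos_of_pos (by positivity)
  have hD : 0 < Real.Gamma ((k : ℝ) + η + 1) := Real.Gamma_pos_of_pos (by positivity)
  unfold Upsilon
  positivity

lemma upsilon_mono (p : ℕ) (c η : ℝ) (hc : -(p : ℝ) < c) (hη : 0 ≤ η) (k : ℕ)
    (hk : p ≤ k) : Upsilon p c η (k + 1) ≤ Upsilon p c η k := by
  have hkp : (p : ℝ) ≤ k := Nat.cast_le.mpr hk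
  have hck : (0 : ℝ) < c + k := by linarith
  have hcp : (0 : ℝ) < c + p := by linarith
  have hA : 0 < Real.Gamma ((k : ℝ) + 1) := Real.Gamma_pos_of_pos (by positivity)
  have hB : 0 < Real.Gamma ((p : ℝ) + η + 1) := Real.Gamma_pos_of_pos (by positivity)
  have hC : 0 < Real.Gamma ((p : ℝ) + 1) := Real.Gamma_pos_of_pos (by positivity)
  have hD : 0 < Real.Gamma ((k : ℝ) + η + 1) := Real.Gamma_pos_of_pos (by positivity)
  unfold Upsilon
  push_cast
  have e1 : Real.Gamma ((k : ℝ) + 1 + 1) = ((k : ℝ) + 1) * Real.Gamma ((k : ℝ) + 1) :=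
    Real.Gamma_add_one (by positivity)
  have e2 : Real.Gamma ((k : ℝ) + 1 + η + 1) = ((k : ℝ) + η + 1) * Real.Gamma ((k : ℝ) + η + 1) := by
    rw [show (k : ℝ) + 1 + η + 1 = ((k : ℝ) + η + 1) + 1 by ring,
      Real.Gamma_add_one (by positivity)]
  have hck1 : (0:ℝ) < c + ((k:ℝ) + 1) := by linarith
  have hkη : (0:ℝ) < (k:ℝ) + η + 1 := by positivity
  rw [e1, e2, div_le_div_iff₀ (mul_pos (mul_pos hck1 hC) (mul_pos hkη hD))
    (mul_pos (mul_pos hck hC) hD)]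
  have key : ((k : ℝ) + 1) * (c + k) ≤ (c + (k + 1)) * ((k : ℝ) + η + 1) := by nlinarith
  nlinarith [mul_le_mul_of_nonneg_right key
    (le_of_lt (show (0:ℝ) < (c + p) * Real.Gamma ((k : ℝ) + 1) * Real.Gamma ((p : ℝ) + η + 1) *
      Real.Gamma ((p : ℝ) + 1) * Real.Gamma ((k : ℝ) + η + 1) by positivity))]

theorem stmt13 (p : ℕ) (hp : 0 < p) (c η : ℝ) (hc : -(p : ℝ) < c) (hη : 0 ≤ η) :
    (∀ k : ℕ, p ≤ k → Upsilon p c η (k + 1) ≤ Upsilon p c η k) ∧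
    (∀ k : ℕ, p + 1 ≤ k → 0 < Upsilon p c η k ∧
      Upsilon p c η k ≤ (c + p) * ((p : ℝ) + 1) / ((c + p + 1) * ((p : ℝ) + η + 1))) ∧
    Upsilon p c η (p + 1) = (c + p) * ((p : ℝ) + 1) / ((c + p + 1) * ((p : ℝ) + η + 1)) := by
  have hcp : (0 : ℝ) < c + p := by linarith
  have hval : Upsilon p c η (p + 1) =
      (c + p) * ((p : ℝ) + 1) / ((c + p + 1) * ((p : ℝ) + η + 1)) := by
    have hB : 0 < Real.Gamma ((p : ℝ) + η + 1) := Real.Gamma_pos_of_pos (by positivity)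
    have hC : 0 < Real.Gamma ((p : ℝ) + 1) := Real.Gamma_pos_of_pos (by positivity)
    unfold Upsilon
    push_cast
    have e1 : Real.Gamma ((p : ℝ) + 1 + 1) = ((p : ℝ) + 1) * Real.Gamma ((p : ℝ) + 1) :=
      Real.Gamma_add_one (by positivity)
    have e2 : Real.Gamma ((p : ℝ) + 1 + η + 1) = ((p : ℝ) + η + 1) * Real.Gamma ((p : ℝ) + η + 1) := by
      rw [show (p : ℝ) + 1 + η + 1 = ((p : ℝ) + η + 1) + 1 by ring,
        Real.Gamma_add_one (by positivity)]
    rw [e1, e2]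
    have h1 : c + ((p : ℝ) + 1) ≠ 0 := by intro h; nlinarith
    have h2 : ((p : ℝ) + η + 1) ≠ 0 := by positivity
    have h3 : (c + (p:ℝ) + 1) ≠ 0 := by intro h; nlinarith
    field_simp
    ring
  refine ⟨fun k hk => upsilon_mono p c η hc hη k hk, fun k hk => ?_, hval⟩
  refine ⟨upsilon_pos p c η hc hη k (le_trans (Nat.le_succ p) hk), ?_⟩
  rw [← hval]
  induction k, hk using Nat.le_induction with
  | base => exact le_refl _
  | succ n hn ih =>
      exact le_trans (upsilon_mono p c η hc hη n (le_trans (Nat.le_succ p) hn)) ih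
end

section
/- Let 0 ≤ α < p, 0 ≤ β < p, 0 ≤ μ < 1, 0 ≤ δ ≤ 1, −1 ≤ B < A ≤ 1. Define a₁ = (A−B)(p−α)/([(1−B)+(A−B)(p−α)](1−μ)(p+δ)) and a₂ = (A−B)(p−β)/([(1−B)+(A−B)(p−β)](1−μ)(p+δ)). Then the single-term sequences with (p+1)-coefficient a₁ (resp. a₂) satisfy with equality the coefficient inequalities defining R_{μ,p}^δ(α;A,B) and R_{μ,p}^δ(β;A,B), and the product sequence with (p+1)-coefficient a₁a₂ satisfies with equality the inequality defining R_{μ,p}^δ(ξ;A,B), where ξ = p − (1−B)(A−B)(p−α)(p−β)/([(1−B)+(A−B)(p−α)][(1−B)+(A−B)(p−β)](1−μ)(p+δ) − (A−B)²(p−α)(p−β)), assuming the denominator is positive. -/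
/-! Write `D γ = (1 - B) + (A - B) (p - γ)` and `M = (1 - μ)(p + δ)`. A single-term sequence with
`(p+1)`-coefficient `a` gives equality in the inequality of order `γ` exactly when
`a = (A - B)(p - γ) / (D γ M)`. The order `ξ` is the one whose extremal coefficient is the product
of those of orders `α` and `β`: with `E = D α D β M - (A - B)² (p - α)(p - β)` one has
`p - ξ = (1 - B)(A - B)(p - α)(p - β) / E`, hence `D ξ = (1 - B) D α D β M / E`, and the
equality for `ξ` reduces to a rational identity. -/

open Real

/-- Weight of the defining inequality of the class R_{μ,p}^δ(γ;A,B), at shifted index p+1+k. -/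
noncomputable def wOrd (p : ℕ) (γ μ δ A B : ℝ) (k : ℕ) : ℝ :=
  ((1 - B) * ((k : ℝ) + 1) + (A - B) * ((p : ℝ) - γ)) * (1 - μ) ^ (k + 1) *
    (Real.Gamma ((p : ℝ) + 1 + (k : ℝ) + δ) / Real.Gamma ((p : ℝ) + δ))

lemma wOrd_zero (p : ℕ) (γ μ δ A B : ℝ) (hpδ : 0 < (p : ℝ) + δ) :
    wOrd p γ μ δ A B 0 = ((1 - B) + (A - B) * ((p : ℝ) - γ)) * (1 - μ) * ((p : ℝ) + δ) := by
  have hGamma : Gamma ((p : ℝ) + 1 + ((0 : ℕ) : ℝ) + δ) / Gamma ((p : ℝ) + δ) = (p : ℝ) + δ := by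
    rw [Nat.cast_zero, add_zero, add_right_comm, Gamma_add_one hpδ.ne',
      mul_div_cancel_right₀ _ (Gamma_pos_of_pos hpδ).ne']
  rw [wOrd, hGamma]
  push_cast
  ring

lemma tsum_wOrd_mul_single (p : ℕ) (γ μ δ A B a : ℝ) (hpδ : 0 < (p : ℝ) + δ) :
    ∑' k : ℕ, wOrd p γ μ δ A B k * (if k = 0 then a else 0)
      = ((1 - B) + (A - B) * ((p : ℝ) - γ)) * (1 - μ) * ((p : ℝ) + δ) * a := by
  simp only [mul_ite, mul_zero]
  rw [tsum_ite_eq, wOrd_zero p γ μ δ A B hpδ]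

lemma extremal_coeff_mul_identity (b c x y m n : ℝ) (hx : b + c * x ≠ 0) (hy : b + c * y ≠ 0)
    (hm : m ≠ 0) (hn : n ≠ 0) (hE : (b + c * x) * (b + c * y) * m * n - c ^ 2 * x * y ≠ 0) :
    (b + c * (b * c * x * y / ((b + c * x) * (b + c * y) * m * n - c ^ 2 * x * y))) * m * n *
        (c * x / ((b + c * x) * m * n) * (c * y / ((b + c * y) * m * n)))
      = c * (b * c * x * y / ((b + c * x) * (b + c * y) * m * n - c ^ 2 * x * y)) := by
  field_simp
  ring

theorem stmt17_general (p : ℕ) (hp : 0 < p) (α μ δ A B : ℝ)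
    (hαp : α < p) (hμ1 : μ < 1)
    (hδ0 : 0 ≤ δ) (hBA : B < A) (hA : A ≤ 1)
    (β : ℝ) (hβp : β < p)
    (a₁ a₂ ξ : ℝ)
    (ha₁ : a₁ = (A - B) * ((p : ℝ) - α) /
      (((1 - B) + (A - B) * ((p : ℝ) - α)) * (1 - μ) * ((p : ℝ) + δ)))
    (ha₂ : a₂ = (A - B) * ((p : ℝ) - β) /
      (((1 - B) + (A - B) * ((p : ℝ) - β)) * (1 - μ) * ((p : ℝ) + δ)))
    (hdenpos : 0 < ((1 - B) + (A - B) * ((p : ℝ) - α)) * ((1 - B) + (A - B) * ((p : ℝ) - β)) *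
        (1 - μ) * ((p : ℝ) + δ) - (A - B) ^ 2 * ((p : ℝ) - α) * ((p : ℝ) - β))
    (hξ : ξ = (p : ℝ) - (1 - B) * (A - B) * ((p : ℝ) - α) * ((p : ℝ) - β) /
      (((1 - B) + (A - B) * ((p : ℝ) - α)) * ((1 - B) + (A - B) * ((p : ℝ) - β)) *
        (1 - μ) * ((p : ℝ) + δ) - (A - B) ^ 2 * ((p : ℝ) - α) * ((p : ℝ) - β))) :
    (∑' k : ℕ, wOrd p α μ δ A B k * (if k = 0 then a₁ else 0) = (A - B) * ((p : ℝ) - α)) ∧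
    (∑' k : ℕ, wOrd p β μ δ A B k * (if k = 0 then a₂ else 0) = (A - B) * ((p : ℝ) - β)) ∧
    (∑' k : ℕ, wOrd p ξ μ δ A B k * (if k = 0 then a₁ * a₂ else 0)
      = (A - B) * ((p : ℝ) - ξ)) := by
  have hp1 : (1 : ℝ) ≤ p := by exact_mod_cast hp
  have hpδ : 0 < (p : ℝ) + δ := by linarith
  have hμ : 0 < 1 - μ := by linarith
  have hDα : 0 < (1 - B) + (A - B) * ((p : ℝ) - α) := by nlinarith
  have hDβ : 0 < (1 - B) + (A - B) * ((p : ℝ) - β) := by nlinarith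
  refine ⟨?_, ?_, ?_⟩
  · rw [tsum_wOrd_mul_single p α μ δ A B a₁ hpδ, ha₁, mul_div_cancel₀ _ (by positivity)]
  · rw [tsum_wOrd_mul_single p β μ δ A B a₂ hpδ, ha₂, mul_div_cancel₀ _ (by positivity)]
  · rw [tsum_wOrd_mul_single p ξ μ δ A B _ hpδ, ha₁, ha₂, hξ, sub_sub_cancel]
    exact extremal_coeff_mul_identity _ _ _ _ _ _ hDα.ne' hDβ.ne' hμ.ne' hpδ.ne' hdenpos.ne'

theorem stmt17 (p : ℕ) (hp : 0 < p) (α μ δ A B : ℝ)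
    (hα0 : 0 ≤ α) (hαp : α < p) (hμ0 : 0 ≤ μ) (hμ1 : μ < 1)
    (hδ0 : 0 ≤ δ) (hδ1 : δ ≤ 1) (hB : -1 ≤ B) (hBA : B < A) (hA : A ≤ 1)
    (β : ℝ) (hβ0 : 0 ≤ β) (hβp : β < p)
    (a₁ a₂ ξ : ℝ)
    (ha₁ : a₁ = (A - B) * ((p : ℝ) - α) /
      (((1 - B) + (A - B) * ((p : ℝ) - α)) * (1 - μ) * ((p : ℝ) + δ)))
    (ha₂ : a₂ = (A - B) * ((p : ℝ) - β) /
      (((1 - B) + (A - B) * ((p : ℝ) - β)) * (1 - μ) * ((p : ℝ) + δ)))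
    (hdenpos : 0 < ((1 - B) + (A - B) * ((p : ℝ) - α)) * ((1 - B) + (A - B) * ((p : ℝ) - β)) *
        (1 - μ) * ((p : ℝ) + δ) - (A - B) ^ 2 * ((p : ℝ) - α) * ((p : ℝ) - β))
    (hξ : ξ = (p : ℝ) - (1 - B) * (A - B) * ((p : ℝ) - α) * ((p : ℝ) - β) /
      (((1 - B) + (A - B) * ((p : ℝ) - α)) * ((1 - B) + (A - B) * ((p : ℝ) - β)) *
        (1 - μ) * ((p : ℝ) + δ) - (A - B) ^ 2 * ((p : ℝ) - α) * ((p : ℝ) - β))) :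
    (∑' k : ℕ, wOrd p α μ δ A B k * (if k = 0 then a₁ else 0) = (A - B) * ((p : ℝ) - α)) ∧
    (∑' k : ℕ, wOrd p β μ δ A B k * (if k = 0 then a₂ else 0) = (A - B) * ((p : ℝ) - β)) ∧
    (∑' k : ℕ, wOrd p ξ μ δ A B k * (if k = 0 then a₁ * a₂ else 0)
      = (A - B) * ((p : ℝ) - ξ)) :=
  stmt17_general p hp α μ δ A B hαp hμ1 hδ0 hBA hA β hβp a₁ a₂ ξ ha₁ ha₂ hdenpos hξ
end
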